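/- arXiv:2109.05514 — 3 statements merged into one kernel-verified Lean document; each statement's English description precedes it below -/
import Mathlib

section
/- For every odd prime power q, the matrix S_q satisfies S_q S_qᵀ = q·I_{q+1} over the integers. -/
/-!
Write `χ` for the quadratic character. The row of `∞` has `q` entries equal to `1`, and it is
orthogonal to every other row because `∑ χ = 0`. A finite row `a` has squared length
`χ(-1)² + #{c ≠ a} = q`. For `a ≠ b` the substitution `c = a - (a - b) x` turns
`∑_c χ(a - c) χ(b - c)` into `χ(-1) · J(χ, χ)`, and the Jacobi sum `J(χ, χ) = J(χ, χ⁻¹)` equals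
`-χ(-1)`; together with the entry `χ(-1)²` from the column `∞` the inner product vanishes.
-/

open Matrix Finset

/-- The Pless matrix `S_q`, with rows and columns indexed by `GF(q) ∪ {∞}`
(`none` playing the role of `∞`), built from the quadratic character of `GF(q)`. -/
def Smat (F : Type) [Field F] [Fintype F] [DecidableEq F] :
    Matrix (Option F) (Option F) ℤ := fun i j =>
  match i, j with
  | none, none => 0
  | none, some _ => 1
  | some _, none => quadraticChar F (-1)
  | some a, some b => quadraticChar F (a - b)

namespace MulChar

lemma IsQuadratic.apply_mul_self {M R : Type*} [CommMonoid M] [CommRing R] {χ : MulChar M R}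
    (hχ : χ.IsQuadratic) {a : M} (ha : IsUnit a) : χ a * χ a = 1 := by
  rw [← mul_apply, ← pow_two, hχ.sq_eq_one, one_apply ha]

variable {F R : Type*} [Field F] [Fintype F] [CommRing R] {χ : MulChar F R}

lemma sum_apply_sub_eq_zero [IsDomain R] (hχ : χ ≠ 1) (a : F) : ∑ c, χ (a - c) = 0 :=
  ((Equiv.subLeft a).sum_comp χ).trans (sum_eq_zero_of_ne_one hχ)

lemma IsQuadratic.sum_apply_sub_mul_self [DecidableEq F] (hχ : χ.IsQuadratic) (a : F) :
    ∑ c, χ (a - c) * χ (a - c) = Fintype.card F - 1 := by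
  simp_rw [← mul_apply, ← pow_two, hχ.sq_eq_one]
  rw [show ∑ c, (1 : MulChar F R) (a - c) = ∑ c, (1 : MulChar F R) c from
    (Equiv.subLeft a).sum_comp _, sum_one_eq_card_units,
    Fintype.card_eq_card_units_add_one (α := F)]
  push_cast
  ring

lemma IsQuadratic.sum_apply_sub_mul_apply_sub [IsDomain R] (hχ : χ.IsQuadratic) (hχ1 : χ ≠ 1)
    {a b : F} (hab : a ≠ b) : ∑ c, χ (a - c) * χ (b - c) = -1 := by
  have hd : a - b ≠ 0 := sub_ne_zero.mpr hab
  have hterm (x : F) : χ (a - (a - (a - b) * x)) * χ (b - (a - (a - b) * x))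
      = χ (-1) * (χ x * χ (1 - x)) := by
    rw [show a - (a - (a - b) * x) = (a - b) * x by ring,
      show b - (a - (a - b) * x) = -1 * (a - b) * (1 - x) by ring]
    simp only [map_mul]
    linear_combination (χ (-1) * χ x * χ (1 - x)) * hχ.apply_mul_self hd.isUnit
  calc ∑ c, χ (a - c) * χ (b - c)
      = ∑ x, χ (a - (a - (a - b) * x)) * χ (b - (a - (a - b) * x)) :=
        (((Equiv.mulLeft₀ (a - b) hd).trans (Equiv.subLeft a)).sum_comp _).symm
    _ = χ (-1) * jacobiSum χ χ := by simp only [hterm, jacobiSum, mul_sum]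
    _ = -1 := by
      have hJ : jacobiSum χ χ = -χ (-1) := by
        simpa only [hχ.inv] using jacobiSum_nontrivial_inv hχ1
      rw [hJ]
      linear_combination -hχ.apply_mul_self isUnit_one.neg

end MulChar

/-- For every odd prime power `q` (realized as the cardinality of a finite field `F`),
the matrix `S_q` satisfies `S_q * S_qᵀ = q • I` over the integers. -/
theorem stmt_0 (q : ℕ) (hq : Odd q) (F : Type) [Field F] [Fintype F] [DecidableEq F]
    (hF : Fintype.card F = q) :
    Smat F * (Smat F)ᵀ = (q : ℤ) • (1 : Matrix (Option F) (Option F) ℤ) := by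
  subst hF
  have hF2 : ringChar F ≠ 2 := fun h =>
    Nat.not_even_iff_odd.mpr hq (Nat.even_iff.mpr (FiniteField.even_card_of_char_two h))
  have hχ := quadraticChar_isQuadratic F
  have hχ1 := quadraticChar_ne_one hF2
  ext (_ | a) (_ | b) <;>
    simp only [mul_apply, Smat, transpose_apply, Fintype.sum_option, Matrix.smul_apply, one_apply,
      Option.some.injEq, reduceCtorEq, ↓reduceIte, smul_eq_mul, mul_ite, mul_one, mul_zero,
      zero_mul, one_mul, zero_add, add_zero, sum_const, card_univ, nsmul_eq_mul,
      MulChar.sum_apply_sub_eq_zero hχ1, hχ.apply_mul_self isUnit_one.neg]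
  split_ifs with hab
  · rw [hab, hχ.sum_apply_sub_mul_self]
    ring
  · rw [hχ.sum_apply_sub_mul_apply_sub hχ1 hab]
    ring
end

section
/- For every odd prime power q with q ≡ 2 (mod 3), the Pless symmetry code C(q) is a self-dual ternary code: C(q) equals its dual code with respect to the standard bilinear form on GF(3)^{2q+2}; in particular C(q) has dimension q+1. -/
open Matrix Finset

/-- The row of the generator matrix `(I | S_q)` of the Pless symmetry code,
reduced modulo 3, indexed by `i : Option F`. -/
def genRowC (F : Type) [Field F] [Fintype F] [DecidableEq F] (i : Option F) :
    (Option F ⊕ Option F) → ZMod 3 := fun j =>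
  match j with
  | Sum.inl k => if i = k then 1 else 0
  | Sum.inr k => ((Smat F i k : ℤ) : ZMod 3)

/-- The Pless symmetry code `C(q)`: the ternary code of length `2q+2` spanned by
the rows of `(I | S_q)` reduced modulo 3. -/
def Ccode (F : Type) [Field F] [Fintype F] [DecidableEq F] :
    Submodule (ZMod 3) ((Option F ⊕ Option F) → ZMod 3) :=
  Submodule.span (ZMod 3) (Set.range (genRowC F))

section SelfDual

variable {K ι n : Type*} [Field K] [Fintype n]

theorem dotProductBilin_nondegenerate [DecidableEq n] :
    (dotProductBilin K K : LinearMap.BilinForm K (n → K)).Nondegenerate := by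
  refine (LinearMap.IsRefl.nondegenerate_iff_separatingLeft
    fun v w h => by simpa [dotProduct_comm] using h).mpr fun v h => ?_
  funext j
  simpa using h (Pi.single j 1)

theorem dotProduct_eq_zero_of_mem_span [Fintype ι] {r : ι → n → K}
    (horth : ∀ i j, r i ⬝ᵥ r j = 0) {v w : n → K}
    (hv : v ∈ Submodule.span K (Set.range r)) (hw : w ∈ Submodule.span K (Set.range r)) :
    v ⬝ᵥ w = 0 := by
  obtain ⟨a, rfl⟩ := Submodule.mem_span_range_iff_exists_fun K |>.mp hv
  obtain ⟨b, rfl⟩ := Submodule.mem_span_range_iff_exists_fun K |>.mp hw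
  simp [sum_dotProduct, dotProduct_sum, horth]

theorem mem_iff_forall_dotProduct_eq_zero_of_two_mul_finrank [DecidableEq n]
    {C : Submodule K (n → K)} (hC : ∀ v ∈ C, ∀ w ∈ C, v ⬝ᵥ w = 0)
    (hdim : 2 * Module.finrank K C = Fintype.card n) (v : n → K) :
    v ∈ C ↔ ∀ c ∈ C, v ⬝ᵥ c = 0 := by
  let B : LinearMap.BilinForm K (n → K) := dotProductBilin K K
  have hle : C ≤ B.orthogonal C := fun v hv w hw => hC w hw v hv
  have heq : C = B.orthogonal C := Submodule.eq_of_le_of_finrank_eq hle (by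
    rw [LinearMap.BilinForm.finrank_orthogonal dotProductBilin_nondegenerate,
      Module.finrank_fintype_fun_eq_card]
    omega)
  conv_lhs => rw [heq]
  simp [LinearMap.BilinForm.mem_orthogonal_iff, B, dotProduct_comm]

end SelfDual

section GeneratorMatrix

variable {K m : Type*} [Field K] [Fintype m] [DecidableEq m]

theorem linearIndependent_fromCols_one {R n : Type*} [CommRing R] (A : Matrix m n R) :
    LinearIndependent R (fromCols (1 : Matrix m m _) A) :=
  LinearIndependent.of_comp (LinearMap.funLeft R R Sum.inl)
    (linearIndependent_rows_of_isUnit isUnit_one)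

theorem fromCols_one_mul_transpose {R n : Type*} [CommRing R] [Fintype n] (A : Matrix m n R) :
    fromCols (1 : Matrix m m _) A * (fromCols (1 : Matrix m m _) A)ᵀ = 1 + A * Aᵀ := by
  rw [transpose_fromCols, fromCols_mul_fromRows, transpose_one, one_mul]

theorem finrank_span_fromCols_one (A : Matrix m m K) :
    Module.finrank K (Submodule.span K (Set.range (fromCols (1 : Matrix m m _) A))) =
      Fintype.card m :=
  finrank_span_eq_card (linearIndependent_fromCols_one A)

theorem mem_span_fromCols_one_iff (A : Matrix m m K) (hA : A * Aᵀ = -1) (v : m ⊕ m → K) :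
    v ∈ Submodule.span K (Set.range (fromCols (1 : Matrix m m _) A)) ↔
      ∀ c ∈ Submodule.span K (Set.range (fromCols (1 : Matrix m m _) A)), v ⬝ᵥ c = 0 := by
  refine mem_iff_forall_dotProduct_eq_zero_of_two_mul_finrank
    (fun v hv w hw => dotProduct_eq_zero_of_mem_span (fun i j => ?_) hv hw) ?_ v
  · change (fromCols (1 : Matrix m m _) A * (fromCols (1 : Matrix m m _) A)ᵀ) i j = 0
    rw [fromCols_one_mul_transpose, hA, add_neg_cancel, Matrix.zero_apply]
  · rw [finrank_span_fromCols_one, Fintype.card_sum]; ring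

end GeneratorMatrix

section QuadraticChar

variable {F : Type*} [Field F] [Fintype F] [DecidableEq F]

theorem quadraticChar_mul_self {a : F} (ha : a ≠ 0) :
    quadraticChar F a * quadraticChar F a = 1 := by
  rw [← sq]; exact quadraticChar_sq_one ha

theorem quadraticChar_sum_mul_self :
    ∑ x : F, quadraticChar F x * quadraticChar F x = Fintype.card Fˣ := by
  rw [← MulChar.sum_one_eq_card_units, ← (quadraticChar_isQuadratic F).sq_eq_one, sq]
  simp only [MulChar.mul_apply]

theorem quadraticChar_sum_mul_add (hF : ringChar F ≠ 2) {d : F} (hd : d ≠ 0) :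
    ∑ x : F, quadraticChar F x * quadraticChar F (x + d) = -1 := by
  have hJ := jacobiSum_nontrivial_inv (quadraticChar_ne_one hF)
  rw [(quadraticChar_isQuadratic F).inv] at hJ
  set χ := quadraticChar F
  calc ∑ x, χ x * χ (x + d) = ∑ y, χ (-d * y) * χ (-d * y + d) :=
        (Fintype.sum_bijective _ (mulLeft_bijective₀ _ (neg_ne_zero.2 hd)) _ _ fun _ => rfl).symm
    _ = ∑ y, χ (-1) * (χ d * χ d) * (χ y * χ (1 - y)) := by
        refine Fintype.sum_congr _ _ fun y => ?_
        rw [show -d * y + d = d * (1 - y) by ring, show -d * y = -1 * d * y by ring]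
        simp only [map_mul]; ring
    _ = -1 := by
        rw [← mul_sum, ← jacobiSum, hJ, quadraticChar_mul_self hd]
        linear_combination -quadraticChar_mul_self (neg_ne_zero.2 (one_ne_zero (α := F)))

theorem quadraticChar_sum_sub_mul_sub (hF : ringChar F ≠ 2) (a c : F) :
    ∑ b : F, quadraticChar F (a - b) * quadraticChar F (c - b) =
      if a = c then (Fintype.card Fˣ : ℤ) else -1 := by
  rw [← Fintype.sum_equiv (Equiv.subLeft a)
    (fun x => quadraticChar F x * quadraticChar F (x + (c - a))) _
    fun b => by simp only [Equiv.subLeft_apply]; ring_nf]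
  split_ifs with h
  · simp only [h, sub_self, add_zero, quadraticChar_sum_mul_self]
  · exact quadraticChar_sum_mul_add hF (sub_ne_zero.2 (Ne.symm h))

theorem quadraticChar_sum_sub (hF : ringChar F ≠ 2) (a : F) :
    ∑ b : F, quadraticChar F (a - b) = 0 :=
  (Fintype.sum_equiv (Equiv.subLeft a) _ (quadraticChar F) fun _ => rfl).trans
    (quadraticChar_sum_zero hF)

end QuadraticChar

theorem smat_mul_transpose (F : Type) [Field F] [Fintype F] [DecidableEq F]
    (hF : ringChar F ≠ 2) :
    Smat F * (Smat F)ᵀ = (Fintype.card F : ℤ) • 1 := by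
  ext (_ | a) (_ | c) <;>
    simp only [mul_apply, Fintype.sum_option, transpose_apply, Smat, Matrix.smul_apply, one_apply,
      zero_mul, mul_zero, one_mul, mul_one, zero_add, quadraticChar_sum_sub hF,
      quadraticChar_mul_self (neg_ne_zero.2 (one_ne_zero (α := F))),
      quadraticChar_sum_sub_mul_sub hF, Option.some.injEq, reduceCtorEq]
  case some.some => split_ifs <;> simp [Fintype.card_eq_card_units_add_one (α := F), add_comm]
  all_goals simp

theorem genRowC_eq_fromCols (F : Type) [Field F] [Fintype F] [DecidableEq F] :
    genRowC F = fromCols 1 ((Smat F).map ((↑) : ℤ → ZMod 3)) := by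
  ext i (k | k) <;> rfl

theorem map_smat_mul_transpose_eq_neg_one (F : Type) [Field F] [Fintype F] [DecidableEq F]
    (hF : ringChar F ≠ 2) (h3 : Fintype.card F % 3 = 2) :
    (Smat F).map ((↑) : ℤ → ZMod 3) * ((Smat F).map ((↑) : ℤ → ZMod 3))ᵀ = -1 := by
  have hq : (Fintype.card F : ZMod 3) = -1 := by
    rw [← ZMod.natCast_mod, h3]; rfl
  have hS := congrArg (Int.castRingHom (ZMod 3)).mapMatrix (smat_mul_transpose F hF)
  rw [map_mul] at hS
  refine hS.trans ?_
  ext i j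
  by_cases h : i = j <;> simp [h, hq, Matrix.natCast_apply]

/-- For every odd prime power `q ≡ 2 (mod 3)`, the Pless symmetry code `C(q)` is self-dual:
it equals its dual code with respect to the standard bilinear form on `GF(3)^{2q+2}`;
in particular it has dimension `q+1`. -/
theorem stmt_1 (q : ℕ) (hq : Odd q) (h3 : q % 3 = 2)
    (F : Type) [Field F] [Fintype F] [DecidableEq F] (hF : Fintype.card F = q) :
    (∀ v : (Option F ⊕ Option F) → ZMod 3,
        v ∈ Ccode F ↔ ∀ c ∈ Ccode F, ∑ j, v j * c j = 0) ∧
    Module.finrank (ZMod 3) (Ccode F) = q + 1 := by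
  subst hF
  have hF2 : ringChar F ≠ 2 := fun h =>
    Nat.not_even_iff_odd.mpr hq (Nat.even_iff.mpr (FiniteField.even_card_of_char_two h))
  rw [Ccode, genRowC_eq_fromCols]
  exact ⟨mem_span_fromCols_one_iff _ (map_smat_mul_transpose_eq_neg_one F hF2 h3),
    by rw [finrank_span_fromCols_one, Fintype.card_option]⟩
end

section
/- Let F be a family of 36 pairwise distinct 15-element subsets of a 36-element point set X such that any two distinct members of F intersect in exactly 6 points. Then F is the block set of a symmetric 2-(36,15,6) design: every point of X lies in exactly 15 members of F, and every pair of distinct points of X lies in exactly 6 members of F. -/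
/-!
Let `d(y)` be the number of blocks through the point `y`. Double counting gives
`∑ d(y) = ∑ |B|` and `∑ d(y)² = ∑_{B,C} |B ∩ C|`; with `v` blocks of size `k` meeting pairwise
in `l` points and `l (v - 1) = k (k - 1)`, these are `v k` and `v k²`, so `d` has variance zero
and is constantly `k`. Running the same argument on the `k` blocks through a point `x`, over
the remaining `v - 1` points, shows that every other point lies in exactly `l` of them.
-/

open Finset

namespace Finset

theorem eq_of_sum_eq_of_sum_sq_eq {ι R : Type*} [CommRing R] [LinearOrder R]
    [IsStrictOrderedRing R] {s : Finset ι} {f : ι → R} {c : R}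
    (h₁ : ∑ i ∈ s, f i = #s * c) (h₂ : ∑ i ∈ s, f i ^ 2 = #s * c ^ 2) :
    ∀ i ∈ s, f i = c := by
  have hvar : ∑ i ∈ s, (f i - c) ^ 2 = 0 := by
    simp only [sub_sq, sum_add_distrib, sum_sub_distrib, ← sum_mul, ← mul_sum, h₁, h₂,
      sum_const, nsmul_eq_mul]
    ring
  intro i hi
  exact sub_eq_zero.mp <| pow_eq_zero_iff two_ne_zero |>.mp <|
    (sum_eq_zero_iff_of_nonneg fun j _ ↦ sq_nonneg (f j - c)).mp hvar i hi

variable {X : Type*} [DecidableEq X]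

theorem sum_card_inter_eq_add_mul {G : Finset (Finset X)} {k l : ℕ}
    (hk : ∀ B ∈ G, #B = k) (hl : ∀ B ∈ G, ∀ C ∈ G, B ≠ C → #(B ∩ C) = l)
    {B : Finset X} (hB : B ∈ G) : ∑ C ∈ G, #(B ∩ C) = k + (#G - 1) * l := by
  rw [← add_sum_erase G _ hB, inter_self, hk B hB, ← card_erase_of_mem hB, ← smul_eq_mul,
    ← sum_const]
  refine congrArg (k + ·) (sum_congr rfl fun C hC ↦ ?_)
  exact hl B hB C (mem_of_mem_erase hC) (ne_of_mem_erase hC).symm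

theorem sum_sum_card_inter_eq {G : Finset (Finset X)} {k l : ℕ}
    (hk : ∀ B ∈ G, #B = k) (hl : ∀ B ∈ G, ∀ C ∈ G, B ≠ C → #(B ∩ C) = l) :
    ∑ B ∈ G, ∑ C ∈ G, #(B ∩ C) = #G * k + #G * (#G - 1) * l := by
  rw [sum_congr rfl fun B hB ↦ sum_card_inter_eq_add_mul hk hl hB, sum_const,
    smul_eq_mul]
  ring

variable [Fintype X] (G : Finset (Finset X))

theorem sum_card_filter_mem : ∑ y, #{B ∈ G | y ∈ B} = ∑ B ∈ G, #B := by
  simp only [card_eq_sum_ones, sum_filter]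
  rw [sum_comm]
  simp

theorem sum_card_filter_mem_sq :
    ∑ y, #{B ∈ G | y ∈ B} ^ 2 = ∑ B ∈ G, ∑ C ∈ G, #(B ∩ C) := by
  simp only [card_eq_sum_ones, sum_filter, sq, sum_mul_sum]
  rw [sum_comm]
  refine sum_congr rfl fun B _ ↦ ?_
  rw [sum_comm]
  simp [← ite_and, ← mem_inter, inter_comm]

end Finset

section SymmetricDesign

variable {X : Type*} [Fintype X] [DecidableEq X] {F : Finset (Finset X)} {k l : ℕ}

theorem card_filter_mem_eq_of_card_inter_eq (hF : #F = Fintype.card X)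
    (hk : ∀ B ∈ F, #B = k) (hl : ∀ B ∈ F, ∀ C ∈ F, B ≠ C → #(B ∩ C) = l)
    (hkl : l * (Fintype.card X - 1) = k * (k - 1)) (x : X) : #{B ∈ F | x ∈ B} = k := by
  set v := Fintype.card X
  have hk₁ : k * (k - 1) + k = k * k := by cases k <;> simp [Nat.mul_succ]
  have hsum : ∑ y, #{B ∈ F | y ∈ B} = v * k := by
    rw [sum_card_filter_mem, sum_congr rfl hk, sum_const, hF, smul_eq_mul]
  have hsum_sq : ∑ y, #{B ∈ F | y ∈ B} ^ 2 = v * k ^ 2 := by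
    rw [sum_card_filter_mem_sq, sum_sum_card_inter_eq hk hl, hF]
    linear_combination v * hkl + v * hk₁
  refine Nat.cast_injective (R := ℤ) <|
    univ.eq_of_sum_eq_of_sum_sq_eq (f := fun y ↦ (#{B ∈ F | y ∈ B} : ℤ)) ?_ ?_ x (mem_univ x)
  · rw [card_univ]; exact_mod_cast hsum
  · rw [card_univ]; exact_mod_cast hsum_sq

theorem card_filter_mem_mem_eq_of_card_inter_eq (hF : #F = Fintype.card X)
    (hk : ∀ B ∈ F, #B = k) (hl : ∀ B ∈ F, ∀ C ∈ F, B ≠ C → #(B ∩ C) = l)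
    (hkl : l * (Fintype.card X - 1) = k * (k - 1)) {x y : X} (hxy : x ≠ y) :
    #{B ∈ F | x ∈ B ∧ y ∈ B} = l := by
  set G := {B ∈ F | x ∈ B}
  have hGF : G ⊆ F := filter_subset _ _
  have hG : #G = k := card_filter_mem_eq_of_card_inter_eq hF hk hl hkl x
  have hkG : ∀ B ∈ G, #B = k := fun B hB ↦ hk B (hGF hB)
  have hlG : ∀ B ∈ G, ∀ C ∈ G, B ≠ C → #(B ∩ C) = l := fun B hB C hC ↦ hl B (hGF hB) C (hGF hC)
  have hx : #{B ∈ G | x ∈ B} = k := by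
    rw [filter_true_of_mem fun B hB ↦ (mem_filter.mp hB).2, hG]
  have hk₁ : k * (k - 1) + k = k * k := by cases k <;> simp [Nat.mul_succ]
  have hsum : ∑ z ∈ univ.erase x, #{B ∈ G | z ∈ B} = (Fintype.card X - 1) * l := by
    have := sum_erase_add univ (fun z ↦ #{B ∈ G | z ∈ B}) (mem_univ x)
    rw [sum_card_filter_mem, sum_congr rfl hkG, sum_const, hG, smul_eq_mul, hx] at this
    linear_combination this - hk₁ - hkl
  have hsum_sq : ∑ z ∈ univ.erase x, #{B ∈ G | z ∈ B} ^ 2 = (Fintype.card X - 1) * l ^ 2 := by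
    have := sum_erase_add univ (fun z ↦ #{B ∈ G | z ∈ B} ^ 2) (mem_univ x)
    rw [sum_card_filter_mem_sq, sum_sum_card_inter_eq hkG hlG, hG, hx] at this
    linear_combination this - l * hkl
  have hxy' : y ∈ univ.erase x := mem_erase.mpr ⟨hxy.symm, mem_univ y⟩
  rw [← filter_filter]
  refine Nat.cast_injective (R := ℤ) <|
    (univ.erase x).eq_of_sum_eq_of_sum_sq_eq (f := fun z ↦ (#{B ∈ G | z ∈ B} : ℤ)) ?_ ?_ y hxy'
  · rw [card_erase_of_mem (mem_univ x), card_univ]; exact_mod_cast hsum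
  · rw [card_erase_of_mem (mem_univ x), card_univ]; exact_mod_cast hsum_sq

end SymmetricDesign

/-- A family of 36 pairwise distinct 15-element subsets of a 36-element point set, any
two distinct members of which meet in exactly 6 points, is the block set of a symmetric
2-(36,15,6) design: every point lies in exactly 15 members, and every pair of distinct
points lies in exactly 6 members. -/
theorem stmt_11 (X : Type) [Fintype X] [DecidableEq X] (hX : Fintype.card X = 36)
    (F : Finset (Finset X)) (hcard : F.card = 36)
    (hsize : ∀ B ∈ F, B.card = 15)
    (hint : ∀ B ∈ F, ∀ C ∈ F, B ≠ C → (B ∩ C).card = 6) :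
    (∀ x : X, (F.filter (fun B => x ∈ B)).card = 15) ∧
    (∀ x y : X, x ≠ y → (F.filter (fun B => x ∈ B ∧ y ∈ B)).card = 6) := by
  have hF : #F = Fintype.card X := hcard.trans hX.symm
  have hkl : 6 * (Fintype.card X - 1) = 15 * (15 - 1) := by rw [hX]
  exact ⟨card_filter_mem_eq_of_card_inter_eq hF hsize hint hkl,
    fun _ _ ↦ card_filter_mem_mem_eq_of_card_inter_eq hF hsize hint hkl⟩
end
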